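/- arXiv:2408.09166 — 2 statements merged into one kernel-verified Lean document; each statement's English description precedes it below -/
import Mathlib

section
/- For every integer n ≥ 0, the following identity holds in ℂ (with i = √−1): hsp(n) = ((7n−24)/49)·2^{n−1} + (−33−15i√3)·(−2)ⁿ/(441·(1+i√3)^{n+1}) + (−33+15i√3)·(−2)ⁿ/(441·(1−i√3)^{n+1}) + 1/3. -/
/-- The indices (0-based) of symmetric peaks of a list of naturals. -/
def symPeakIdx (L : List ℕ) : Finset ℕ :=
  (Finset.range L.length).filter (fun i =>
    i + 2 < L.length ∧ L.getD i 0 < L.getD (i+1) 0 ∧ L.getD i 0 = L.getD (i+2) 0)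

/-- `hsp π`: the sum of the heights of the symmetric peaks of `π`. -/
def hspL (L : List ℕ) : ℕ := ∑ i ∈ symPeakIdx L, (L.getD (i+1) 0 - L.getD i 0)

/-- `hsp(n)`: the total sum of heights of symmetric peaks over all compositions of `n`. -/
def hspN (n : ℕ) : ℕ := ∑ c : Composition n, hspL c.blocks

/-!
Splitting off the first block of a composition gives `hsp(n+1) = ∑_{k ≤ n} hsp(k) + E(n+1)`,
where `E(n)` is the total height of the symmetric peaks at the first position. Those come from
compositions `a, b, a, …` with `a < b`, and counting them gives
`E(n) = ∑_{k < n} (2^{k - 2(n - k)} - 1)`, hence `E(n+3) = E(n) + 2ⁿ - 1`. Combining the two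
recurrences yields `hsp(n+3) = hsp(n) + n·2^{n-1}`. The closed form satisfies the same recurrence
because `(1 ± i√3)³ = (-2)³`, and both vanish at `n = 0, 1, 2`.
-/

open Finset

def compositionBlocks (n : ℕ) : Finset (List ℕ) :=
  univ.image fun c : Composition n => c.blocks

lemma mem_compositionBlocks {n : ℕ} {L : List ℕ} :
    L ∈ compositionBlocks n ↔ (∀ x ∈ L, 0 < x) ∧ L.sum = n := by
  simp only [compositionBlocks, mem_image, mem_univ, true_and]
  constructor
  · rintro ⟨c, rfl⟩
    exact ⟨fun x hx => c.blocks_pos hx, c.blocks_sum⟩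
  · rintro ⟨hpos, hsum⟩
    exact ⟨⟨L, fun hx => hpos _ hx, hsum⟩, rfl⟩

lemma hspN_eq_sum_compositionBlocks (n : ℕ) :
    hspN n = ∑ L ∈ compositionBlocks n, hspL L := by
  rw [hspN, compositionBlocks, sum_image fun c _ d _ h => Composition.ext h]

lemma card_compositionBlocks (n : ℕ) : #(compositionBlocks n) = 2 ^ (n - 1) := by
  rw [compositionBlocks, card_image_of_injective _ fun c d h => Composition.ext h, card_univ,
    composition_card]

lemma compositionBlocks_zero : compositionBlocks 0 = {[]} := by
  ext (_ | ⟨a, L⟩) <;> simp [mem_compositionBlocks]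
  omega

lemma nil_mem_compositionBlocks {n : ℕ} : [] ∈ compositionBlocks n ↔ n = 0 := by
  simp [mem_compositionBlocks, eq_comm]

lemma cons_mem_compositionBlocks {a n : ℕ} {L : List ℕ} :
    a :: L ∈ compositionBlocks n ↔ 0 < a ∧ a ≤ n ∧ L ∈ compositionBlocks (n - a) := by
  simp only [mem_compositionBlocks, List.forall_mem_cons, List.sum_cons]
  constructor
  · rintro ⟨⟨ha, hpos⟩, hsum⟩
    exact ⟨ha, by omega, hpos, by omega⟩
  · rintro ⟨ha, han, hpos, hsum⟩
    exact ⟨⟨ha, hpos⟩, by omega⟩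

lemma sum_compositionBlocks_succ {M : Type*} [AddCommMonoid M] (f : List ℕ → M) (n : ℕ) :
    ∑ L ∈ compositionBlocks (n + 1), f L =
      ∑ k ∈ range (n + 1), ∑ L ∈ compositionBlocks k, f ((n + 1 - k) :: L) := by
  rw [sum_sigma']
  refine sum_nbij' (fun L => ⟨n + 1 - L.headI, L.tail⟩) (fun p => (n + 1 - p.1) :: p.2)
    ?_ ?_ ?_ ?_ ?_
  · rintro (_ | ⟨a, L⟩) hL
    · simp [nil_mem_compositionBlocks] at hL
    · rw [cons_mem_compositionBlocks] at hL
      simp only [mem_sigma, mem_range, List.headI_cons, List.tail_cons]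
      exact ⟨by omega, hL.2.2⟩
  · rintro ⟨k, L⟩ hL
    simp only [mem_sigma, mem_range] at hL
    dsimp only
    rw [cons_mem_compositionBlocks]
    refine ⟨by omega, by omega, ?_⟩
    convert hL.2 using 2
    omega
  · rintro (_ | ⟨a, L⟩) hL
    · simp [nil_mem_compositionBlocks] at hL
    · rw [cons_mem_compositionBlocks] at hL
      simp only [List.headI_cons, List.tail_cons, List.cons.injEq, and_true]
      omega
  · rintro ⟨k, L⟩ hL
    simp only [mem_sigma, mem_range] at hL
    dsimp only
    simp only [List.headI_cons, List.tail_cons, Sigma.mk.injEq, heq_eq_eq, and_true]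
    omega
  · rintro (_ | ⟨a, L⟩) hL
    · simp [nil_mem_compositionBlocks] at hL
    · rw [cons_mem_compositionBlocks] at hL
      simp only [List.headI_cons, List.tail_cons]
      congr
      omega

-- `b - a` truncates to `0` unless `a < b`, so this is the height of a symmetric peak at index `0`.
def headPeakHeight : List ℕ → ℕ
  | a :: b :: c :: _ => if a = c then b - a else 0
  | _ => 0

lemma hspL_cons (a : ℕ) (L : List ℕ) : hspL (a :: L) = hspL L + headPeakHeight (a :: L) := by
  rw [hspL, hspL, symPeakIdx, symPeakIdx, sum_filter, sum_filter, List.length_cons,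
    sum_range_succ']
  simp only [List.getD_cons_succ, List.getD_cons_zero]
  congr 1
  · simp only [Nat.add_right_comm _ 1 2, Nat.add_lt_add_iff_right]
  · rcases L with _ | ⟨b, _ | ⟨c, L⟩⟩ <;> simp [headPeakHeight]
    split_ifs <;> omega

def headPeakSum (n : ℕ) : ℕ := ∑ L ∈ compositionBlocks n, headPeakHeight L

lemma hspN_succ (n : ℕ) :
    hspN (n + 1) = ∑ k ∈ range (n + 1), hspN k + headPeakSum (n + 1) := by
  simp only [hspN_eq_sum_compositionBlocks, headPeakSum, sum_compositionBlocks_succ _ n,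
    hspL_cons, sum_add_distrib]

lemma headPeakHeight_cons_cons (a b : ℕ) (L : List ℕ) :
    headPeakHeight (a :: b :: L) = if L.head? = some a then b - a else 0 := by
  rcases L with _ | ⟨c, L⟩ <;> simp [headPeakHeight, eq_comm]

lemma card_filter_head?_eq_some {a : ℕ} (ha : 0 < a) (n : ℕ) :
    #{L ∈ compositionBlocks n | L.head? = some a} = if a ≤ n then 2 ^ (n - a - 1) else 0 := by
  split_ifs with han
  · have : {L ∈ compositionBlocks n | L.head? = some a} =
        (compositionBlocks (n - a)).map ⟨List.cons a, List.cons_injective⟩ := by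
      ext (_ | ⟨b, L⟩)
      · simp
      · simp only [mem_filter, cons_mem_compositionBlocks, List.head?_cons, Option.some.injEq,
          mem_map, Function.Embedding.coeFn_mk, List.cons.injEq]
        constructor
        · rintro ⟨⟨-, -, hL⟩, rfl⟩
          exact ⟨L, hL, rfl, rfl⟩
        · rintro ⟨L, hL, rfl, rfl⟩
          exact ⟨⟨ha, han, hL⟩, rfl⟩
    rw [this, card_map, card_compositionBlocks]
  · rw [card_eq_zero, filter_eq_empty_iff]
    rintro (_ | ⟨b, L⟩) hL <;> simp [cons_mem_compositionBlocks] at hL ⊢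
    omega

lemma sum_range_two_pow_pred (t : ℕ) : ∑ i ∈ range (t + 1), 2 ^ (i - 1) = 2 ^ t := by
  induction t with
  | zero => rfl
  | succ t ih => rw [sum_range_succ, ih, Nat.add_sub_cancel, pow_succ, mul_two]

lemma sum_range_mul_two_pow_pred (t : ℕ) : ∑ i ∈ range t, (t - i) * 2 ^ (i - 1) = 2 ^ t - 1 := by
  induction t with
  | zero => rfl
  | succ t ih =>
    have hsplit : ∀ i ∈ range (t + 1),
        (t + 1 - i) * 2 ^ (i - 1) = (t - i) * 2 ^ (i - 1) + 2 ^ (i - 1) := by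
      intro i hi
      rw [mem_range] at hi
      rw [Nat.sub_add_comm (by omega), add_mul, one_mul]
    rw [sum_congr rfl hsplit, sum_add_distrib, sum_range_succ, Nat.sub_self, zero_mul, add_zero,
      ih, sum_range_two_pow_pred, pow_succ]
    have := Nat.one_le_two_pow (n := t)
    omega

lemma sum_headPeakHeight_cons {a : ℕ} (ha : 0 < a) (m : ℕ) :
    ∑ L ∈ compositionBlocks m, headPeakHeight (a :: L) = 2 ^ (m - 2 * a) - 1 := by
  rcases m with _ | m
  · simp [compositionBlocks_zero, headPeakHeight]
  simp only [sum_compositionBlocks_succ, headPeakHeight_cons_cons, ← sum_filter, sum_const,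
    smul_eq_mul, card_filter_head?_eq_some ha]
  have hshift : ∑ k ∈ range (m + 1), (if a ≤ k then 2 ^ (k - a - 1) else 0) * (m + 1 - k - a) =
      ∑ i ∈ range (m + 1 - a), (m + 1 - 2 * a - i) * 2 ^ (i - 1) := by
    rw [← sum_subset (s₁ := Ico a (m + 1)) (fun k hk => by simp at hk ⊢; omega)
      (fun k hk hk' => by simp at hk hk'; simp; omega), sum_Ico_eq_sum_range]
    refine sum_congr rfl fun i _ => ?_
    rw [if_pos (Nat.le_add_right a i), mul_comm, Nat.add_sub_cancel_left,
      show m + 1 - (a + i) - a = m + 1 - 2 * a - i by omega]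
  rw [hshift, eventually_constant_sum (N := m + 1 - 2 * a)
    (fun i hi => by simp [Nat.sub_eq_zero_of_le hi]) (by omega), sum_range_mul_two_pow_pred]

lemma headPeakSum_eq (n : ℕ) : headPeakSum n = ∑ k ∈ range n, (2 ^ (k - 2 * (n - k)) - 1) := by
  rcases n with _ | n
  · simp [headPeakSum, compositionBlocks_zero, headPeakHeight]
  · rw [headPeakSum, sum_compositionBlocks_succ]
    exact sum_congr rfl fun k hk => sum_headPeakHeight_cons (by simp at hk; omega) k

lemma headPeakSum_add_three (n : ℕ) : headPeakSum (n + 3) + 1 = headPeakSum n + 2 ^ n := by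
  rw [headPeakSum_eq, headPeakSum_eq, sum_range_succ, sum_range_succ', sum_range_succ']
  have hshift : ∀ k ∈ range n, 2 ^ (k + 1 + 1 - 2 * (n + 3 - (k + 1 + 1))) - 1 =
      2 ^ (k - 2 * (n - k)) - 1 := by
    intro k hk
    rw [mem_range] at hk
    rw [show k + 1 + 1 - 2 * (n + 3 - (k + 1 + 1)) = k - 2 * (n - k) by omega]
  rw [sum_congr rfl hshift, show n + 2 - 2 * (n + 3 - (n + 2)) = n by omega]
  simp only [show 0 + 1 - 2 * (n + 3 - (0 + 1)) = 0 by omega,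
    show 0 - 2 * (n + 3 - 0) = 0 by omega, pow_zero, Nat.sub_self, add_zero]
  have := Nat.one_le_two_pow (n := n)
  omega

lemma hspN_zero : hspN 0 = 0 := by
  simp [hspN_eq_sum_compositionBlocks, compositionBlocks_zero, hspL, symPeakIdx]

lemma hspN_succ_add_headPeakSum (n : ℕ) :
    hspN (n + 1) + headPeakSum n = 2 * hspN n + headPeakSum (n + 1) := by
  rcases n with _ | n
  · simp [hspN_succ, hspN_zero, headPeakSum_eq]
  · have h₁ := hspN_succ (n + 1)
    have h₀ := hspN_succ n
    rw [sum_range_succ] at h₁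
    omega

lemma hspN_eq_zero_of_lt_four {n : ℕ} (hn : n < 4) : hspN n = 0 := by
  have h₀ := hspN_succ_add_headPeakSum 0
  have h₁ := hspN_succ_add_headPeakSum 1
  have h₂ := hspN_succ_add_headPeakSum 2
  simp only [headPeakSum_eq, hspN_zero, sum_range_succ, range_zero, sum_empty] at h₀ h₁ h₂
  interval_cases n <;> simp_all [hspN_zero]

lemma two_mul_hspN_add_three (n : ℕ) : 2 * hspN (n + 3) = 2 * hspN n + n * 2 ^ n := by
  induction n with
  | zero => simp [hspN_eq_zero_of_lt_four]
  | succ n ih =>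
    have r₀ := hspN_succ_add_headPeakSum n
    have r₃ := hspN_succ_add_headPeakSum (n + 3)
    have e₀ := headPeakSum_add_three n
    have e₁ := headPeakSum_add_three (n + 1)
    linear_combination 2 * r₃ - 2 * r₀ + 2 * ih + 2 * e₁ - 2 * e₀

section ClosedForm

open Complex

noncomputable def hspClosedForm (n : ℕ) : ℂ :=
  ((7 * n - 24) / 49) * (2 : ℂ) ^ ((n : ℤ) - 1)
    + (-33 - 15 * I * Real.sqrt 3) * (-2 : ℂ) ^ n / (441 * (1 + I * Real.sqrt 3) ^ (n + 1))
    + (-33 + 15 * I * Real.sqrt 3) * (-2 : ℂ) ^ n / (441 * (1 - I * Real.sqrt 3) ^ (n + 1))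
    + 1 / 3

lemma I_mul_sqrt_three_sq : (I * Real.sqrt 3) ^ 2 = -3 := by
  rw [mul_pow, I_sq, ← ofReal_pow, Real.sq_sqrt (by norm_num)]
  norm_num

lemma one_add_I_mul_sqrt_three_pow_three : (1 + I * Real.sqrt 3) ^ 3 = (-2) ^ 3 := by
  linear_combination (I * Real.sqrt 3 + 3) * I_mul_sqrt_three_sq

lemma one_sub_I_mul_sqrt_three_pow_three : (1 - I * Real.sqrt 3) ^ 3 = (-2) ^ 3 := by
  linear_combination (3 - I * Real.sqrt 3) * I_mul_sqrt_three_sq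

lemma one_add_I_mul_sqrt_three_ne_zero : 1 + I * Real.sqrt 3 ≠ 0 := fun h => by
  have h3 := one_add_I_mul_sqrt_three_pow_three
  norm_num [h] at h3

lemma one_sub_I_mul_sqrt_three_ne_zero : 1 - I * Real.sqrt 3 ≠ 0 := fun h => by
  have h3 := one_sub_I_mul_sqrt_three_pow_three
  norm_num [h] at h3

lemma mul_pow_add_three_div {K : Type*} [Field K] {w z : K} (h : z ^ 3 = w ^ 3) (hw : w ≠ 0)
    (c d : K) (n m : ℕ) : c * w ^ (n + 3) / (d * z ^ (m + 3)) = c * w ^ n / (d * z ^ m) := by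
  rw [pow_add, pow_add, h, ← mul_assoc, ← mul_assoc, mul_div_mul_right _ _ (pow_ne_zero 3 hw)]

lemma hspClosedForm_add_three (n : ℕ) :
    hspClosedForm (n + 3) = hspClosedForm n + n * 2 ^ ((n : ℤ) - 1) := by
  simp only [hspClosedForm, Nat.add_right_comm n 3 1,
    mul_pow_add_three_div one_add_I_mul_sqrt_three_pow_three (by norm_num : (-2 : ℂ) ≠ 0),
    mul_pow_add_three_div one_sub_I_mul_sqrt_three_pow_three (by norm_num : (-2 : ℂ) ≠ 0)]
  push_cast
  rw [show (n : ℤ) + 3 - 1 = (n : ℤ) - 1 + 3 by ring, zpow_add₀ two_ne_zero]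
  ring

lemma hspClosedForm_zero : hspClosedForm 0 = 0 := by
  simp only [hspClosedForm]
  norm_num
  field_simp [one_add_I_mul_sqrt_three_ne_zero, one_sub_I_mul_sqrt_three_ne_zero]
  linear_combination -1323 * I_mul_sqrt_three_sq

lemma hspClosedForm_one : hspClosedForm 1 = 0 := by
  simp only [hspClosedForm]
  norm_num
  field_simp [one_add_I_mul_sqrt_three_ne_zero, one_sub_I_mul_sqrt_three_ne_zero]
  linear_combination (6174 - 882 * (I * Real.sqrt 3) ^ 2) * I_mul_sqrt_three_sq

lemma hspClosedForm_two : hspClosedForm 2 = 0 := by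
  simp only [hspClosedForm, show 2 + 1 = 3 from rfl, one_add_I_mul_sqrt_three_pow_three,
    one_sub_I_mul_sqrt_three_pow_three]
  norm_num
  ring

end ClosedForm

open Complex in
/-- For every `n ≥ 0`,
`hsp(n) = ((7n−24)/49)·2^{n−1} + (−33−15i√3)·(−2)ⁿ/(441·(1+i√3)^{n+1})
        + (−33+15i√3)·(−2)ⁿ/(441·(1−i√3)^{n+1}) + 1/3`. -/
theorem hspN_closed_form (n : ℕ) :
    (hspN n : ℂ) =
      ((7 * n - 24) / 49) * (2 : ℂ) ^ ((n : ℤ) - 1)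
      + (-33 - 15 * I * Real.sqrt 3) * (-2 : ℂ) ^ n /
          (441 * (1 + I * Real.sqrt 3) ^ (n + 1))
      + (-33 + 15 * I * Real.sqrt 3) * (-2 : ℂ) ^ n /
          (441 * (1 - I * Real.sqrt 3) ^ (n + 1))
      + 1 / 3 := by
  change (hspN n : ℂ) = hspClosedForm n
  induction n using Nat.strong_induction_on with
  | _ n ih =>
    rcases n with _ | _ | _ | n
    · simp [hspN_eq_zero_of_lt_four, hspClosedForm_zero]
    · simp [hspN_eq_zero_of_lt_four, hspClosedForm_one]
    · simp [hspN_eq_zero_of_lt_four, hspClosedForm_two]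
    · have h := congrArg (fun k : ℕ => (k : ℂ)) (two_mul_hspN_add_three n)
      push_cast at h
      rw [hspClosedForm_add_three, ← ih n (by omega)]
      rw [zpow_sub₀ two_ne_zero, zpow_one, zpow_natCast]
      linear_combination h / 2
end

section
/- In the ring of formal power series ℚ[[x]], one has (1−2x)²·(1−x³)·(1−x²)²·(Σ_{n≥0} dsv(n)·xⁿ) = x⁵ − 2x⁶ + x⁷ (= x⁵(1−x)²). -/
/-- The indices (0-based) of symmetric valleys of a list of naturals. -/
def symValleyIdx (L : List ℕ) : Finset ℕ :=
  (Finset.range L.length).filter (fun i =>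
    i + 2 < L.length ∧ L.getD i 0 > L.getD (i+1) 0 ∧ L.getD i 0 = L.getD (i+2) 0)

/-- `dsv π`: the sum of the depths of the symmetric valleys of `π`. -/
def dsvL (L : List ℕ) : ℕ := ∑ i ∈ symValleyIdx L, (L.getD i 0 - L.getD (i+1) 0)

/-- `dsv(n)`: the total sum of depths of symmetric valleys over all compositions of `n`. -/
def dsvN (n : ℕ) : ℕ := ∑ c : Composition n, dsvL c.blocks

/-!
Removing the first part of a composition removes exactly the symmetric valley at position 0, so
`dsv π = dsv (tail π) + h π`, where `h π` is the depth of that valley. Summing over compositions,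
`D = x/(1-x) · D + V` for the series `D` of `dsv(n)` and `V` of the totals of `h`. A composition
with a valley at its head is `(b+d, b, b+d)` followed by an arbitrary composition, with `b, d ≥ 1`
and depth `d`; hence `V = x³/(1-x³) · x²/(1-x²)² · C`, where `C = (1-x)/(1-2x)` counts
compositions. Solving for `D` gives the theorem.
-/

open Finset PowerSeries

def compositionLists (n : ℕ) : Finset (List ℕ) :=
  univ.image fun c : Composition n => c.blocks

lemma mem_compositionLists {n : ℕ} {L : List ℕ} :
    L ∈ compositionLists n ↔ L.sum = n ∧ ∀ x ∈ L, 0 < x := by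
  simp only [compositionLists, mem_image, mem_univ, true_and]
  constructor
  · rintro ⟨c, rfl⟩
    exact ⟨c.blocks_sum, fun _ => c.blocks_pos⟩
  · rintro ⟨hsum, hpos⟩
    exact ⟨⟨L, hpos _, hsum⟩, rfl⟩

lemma sum_composition_eq_sum_compositionLists {M : Type*} [AddCommMonoid M] (n : ℕ)
    (f : List ℕ → M) : ∑ c : Composition n, f c.blocks = ∑ L ∈ compositionLists n, f L :=
  (sum_image fun _ _ _ _ => Composition.ext).symm

lemma card_compositionLists (n : ℕ) : #(compositionLists n) = 2 ^ (n - 1) := by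
  rw [compositionLists, card_image_of_injective _ fun _ _ => Composition.ext, card_univ,
    composition_card]

@[simp]
lemma dsvL_nil : dsvL [] = 0 := rfl

def headValleyDepth : List ℕ → ℕ
  | a :: b :: c :: _ => if b < a ∧ c = a then a - b else 0
  | _ => 0

lemma dsvL_cons (a : ℕ) (L : List ℕ) : dsvL (a :: L) = dsvL L + headValleyDepth (a :: L) := by
  rw [dsvL, dsvL, symValleyIdx, symValleyIdx, sum_filter, sum_filter, List.length_cons,
    sum_range_succ']
  congr 1
  · refine sum_congr rfl fun i _ => ?_
    simp only [List.getD_cons_succ, show i + 1 + 2 < L.length + 1 ↔ i + 2 < L.length by omega]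
  · rcases L with _ | ⟨b, _ | ⟨c, S⟩⟩ <;> simp [headValleyDepth, eq_comm]

lemma dsvL_eq_dsvL_tail_add (L : List ℕ) : dsvL L = dsvL L.tail + headValleyDepth L := by
  cases L with
  | nil => simp [headValleyDepth]
  | cons a L => exact dsvL_cons a L

lemma headValleyDepth_eq_ite (L : List ℕ) :
    headValleyDepth L = if 3 ≤ L.length then headValleyDepth (L.take 3) else 0 := by
  rcases L with _ | ⟨a, _ | ⟨b, _ | ⟨c, S⟩⟩⟩ <;> simp [headValleyDepth]

lemma sum_headValleyDepth_length_eq_three (i : ℕ) :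
    ∑ P ∈ compositionLists i, (if P.length = 3 then headValleyDepth P else 0) =
      ∑ x ∈ antidiagonal i, (if x.1 ≠ 0 ∧ 3 ∣ x.1 then 1 else 0) *
        (if 2 ∣ x.2 then x.2 / 2 else 0) := by
  have valley_shape : ∀ P : List ℕ, (if P.length = 3 then headValleyDepth P else 0) ≠ 0 →
      ∃ a b, b < a ∧ P = [a, b, a] := by
    intro P hP
    have hlen : P.length = 3 := by by_contra h; simp [h] at hP
    obtain ⟨a, b, c, rfl⟩ := List.length_eq_three.mp hlen
    simp only [List.length_cons, List.length_nil, headValleyDepth, ite_true] at hP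
    exact ⟨a, b, by split_ifs at hP with h <;> simp_all⟩
  -- `[b + d, b, b + d] ↦ (3b, 2d)`
  refine sum_bij_ne_zero (fun P _ _ => (3 * P.getD 1 0, 2 * (P.getD 0 0 - P.getD 1 0)))
    ?_ ?_ ?_ ?_
  · intro P hP hne
    obtain ⟨a, b, hba, rfl⟩ := valley_shape P hne
    simp only [mem_compositionLists, List.sum_cons, List.sum_nil] at hP
    simp only [List.getD_cons_succ, List.getD_cons_zero, HasAntidiagonal.mem_antidiagonal]
    omega
  · intro P _ hP Q _ hQ h
    obtain ⟨a, b, hba, rfl⟩ := valley_shape P hP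
    obtain ⟨a', b', hba', rfl⟩ := valley_shape Q hQ
    simp only [List.getD_cons_succ, List.getD_cons_zero, Prod.mk.injEq] at h
    simp only [List.cons.injEq, and_true]
    omega
  · rintro ⟨u, v⟩ huv hne
    simp only [HasAntidiagonal.mem_antidiagonal] at huv
    simp only [ne_eq, mul_eq_zero, ite_eq_right_iff, not_or, not_forall] at hne
    obtain ⟨⟨⟨hu, ⟨b, rfl⟩⟩, -⟩, ⟨⟨d, rfl⟩, hd⟩⟩ := hne
    refine ⟨[b + d, b, b + d], ?_, ?_, ?_⟩
    · simp [mem_compositionLists]; omega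
    · simp [headValleyDepth]; omega
    · simp
  · intro P hmem hP
    obtain ⟨a, b, hba, rfl⟩ := valley_shape P hP
    have hb : 0 < b := (mem_compositionLists.mp hmem).2 b (by simp)
    simp [headValleyDepth, hba]
    omega

section CommSemiring

variable {R : Type*} [CommSemiring R]

def compositionSeries (f : List ℕ → R) : R⟦X⟧ :=
  mk fun n => ∑ L ∈ compositionLists n, f L

lemma compositionSeries_add (f g : List ℕ → R) :
    compositionSeries (f + g) = compositionSeries f + compositionSeries g := by
  ext n
  simp [compositionSeries, sum_add_distrib]

lemma compositionSeries_take_mul_drop (k : ℕ) (f g : List ℕ → R) :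
    compositionSeries (fun L => if k ≤ L.length then f (L.take k) * g (L.drop k) else 0) =
      compositionSeries (fun P => if P.length = k then f P else 0) * compositionSeries g := by
  ext n
  simp only [compositionSeries, coeff_mk, coeff_mul, ← sum_filter, sum_mul_sum, ← sum_product',
    sum_sigma']
  refine sum_nbij' (fun L => ⟨((L.take k).sum, (L.drop k).sum), (L.take k, L.drop k)⟩)
    (fun x => x.2.1 ++ x.2.2) ?_ ?_ ?_ ?_ fun _ _ => rfl
  · simp only [mem_filter, mem_sigma, HasAntidiagonal.mem_antidiagonal, mem_product,
      mem_compositionLists, List.sum_take_add_sum_drop, List.length_take, and_imp]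
    intro L hsum hpos hk
    exact ⟨hsum, ⟨⟨trivial, fun x hx => hpos x (List.mem_of_mem_take hx)⟩, by omega⟩,
      trivial, fun x hx => hpos x (List.mem_of_mem_drop hx)⟩
  · rintro ⟨⟨i, j⟩, P, S⟩
    simp only [mem_filter, mem_sigma, HasAntidiagonal.mem_antidiagonal, mem_product,
      mem_compositionLists, List.sum_append, List.mem_append, List.length_append, and_imp]
    rintro hij rfl hP rfl rfl hS
    exact ⟨⟨hij, by rintro x (hx | hx) <;> simp_all⟩, by simp⟩
  · simp
  · rintro ⟨⟨i, j⟩, P, S⟩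
    simp only [mem_sigma, HasAntidiagonal.mem_antidiagonal, mem_product, mem_filter,
      mem_compositionLists, and_imp]
    rintro - rfl - hk rfl -
    simp [List.take_left' hk, List.drop_left' hk]

end CommSemiring

section CommRing

variable {R : Type*} [CommRing R]

def posMultiplesSeries (d : ℕ) : R⟦X⟧ :=
  mk fun n => if n ≠ 0 ∧ d ∣ n then 1 else 0

def halfEvenSeries : R⟦X⟧ :=
  mk fun n => if 2 ∣ n then ((n / 2 : ℕ) : R) else 0

lemma one_sub_X_pow_mul_posMultiplesSeries {d : ℕ} (hd : 0 < d) :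
    (1 - X ^ d) * (posMultiplesSeries d : R⟦X⟧) = X ^ d := by
  ext n
  rw [sub_mul, one_mul, map_sub, coeff_X_pow_mul', posMultiplesSeries, coeff_mk, coeff_mk,
    coeff_X_pow]
  rcases lt_trichotomy n d with hnd | rfl | hdn
  · have : ¬(n ≠ 0 ∧ d ∣ n) := fun h => hnd.not_ge (Nat.le_of_dvd (Nat.pos_of_ne_zero h.1) h.2)
    simp [this, hnd.ne, not_le.mpr hnd]
  · simp [hd.ne']
  · have hn : n ≠ 0 := by omega
    have hnd : n - d ≠ 0 := by omega
    simp [hn, hnd, hdn.ne', hdn.le, not_le.mpr hdn, Nat.dvd_sub_self_right]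

lemma one_sub_X_sq_mul_halfEvenSeries :
    (1 - X ^ 2) * (halfEvenSeries : R⟦X⟧) = posMultiplesSeries 2 := by
  ext n
  rw [sub_mul, one_mul, map_sub, coeff_X_pow_mul', halfEvenSeries, posMultiplesSeries, coeff_mk,
    coeff_mk]
  rcases Nat.lt_or_ge n 2 with hn | hn
  · interval_cases n <;> simp
  · obtain ⟨m, rfl⟩ := Nat.exists_eq_add_of_le hn
    simp only [if_pos hn, coeff_mk, Nat.add_sub_cancel_left, Nat.dvd_add_self_left]
    by_cases h : 2 ∣ m
    · simp [h, show (2 + m) / 2 = m / 2 + 1 by omega]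
    · simp [h]

lemma compositionSeries_length_eq_one :
    compositionSeries (fun P => if P.length = 1 then (1 : R) else 0) = posMultiplesSeries 1 := by
  ext n
  rw [compositionSeries, posMultiplesSeries, coeff_mk, coeff_mk, ← sum_filter, sum_const,
    nsmul_one]
  have : (compositionLists n).filter (·.length = 1) = if n = 0 then ∅ else {[n]} := by
    ext P
    simp only [mem_filter, mem_compositionLists, List.length_eq_one_iff]
    split_ifs with hn
    · simp only [notMem_empty, iff_false, not_and, not_exists]
      rintro ⟨hsum, hpos⟩ x rfl
      simp_all
    · simp only [mem_singleton]
      constructor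
      · rintro ⟨⟨hsum, -⟩, a, rfl⟩
        simp_all
      · rintro rfl
        simp [Nat.pos_of_ne_zero hn]
  split_ifs at this ⊢ <;> simp_all

lemma one_sub_two_X_mul_compositionSeries_one :
    (1 - 2 * X) * compositionSeries (fun _ => (1 : R)) = 1 - X := by
  have h2 : (1 - 2 * X : R⟦X⟧) = 1 - X * C 2 := by rw [map_ofNat]; ring
  ext n
  rw [h2, sub_mul, one_mul, mul_assoc, map_sub, map_sub]
  rcases n with _ | n
  · simp [compositionSeries, card_compositionLists]
  · rw [coeff_succ_X_mul, coeff_C_mul]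
    rcases n with _ | n
    · simp [compositionSeries, card_compositionLists]
      norm_num
    · simp [compositionSeries, card_compositionLists, pow_succ, coeff_X]
      ring

lemma compositionSeries_headValleyDepth_length_eq_three :
    compositionSeries (fun P => if P.length = 3 then (headValleyDepth P : R) else 0) =
      posMultiplesSeries 3 * halfEvenSeries := by
  ext i
  rw [compositionSeries, coeff_mk, coeff_mul]
  simp only [posMultiplesSeries, halfEvenSeries, coeff_mk]
  have := congrArg (Nat.cast : ℕ → R) (sum_headValleyDepth_length_eq_three i)
  push_cast at this
  exact this

lemma compositionSeries_dsvL :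
    compositionSeries (fun L => (dsvL L : R)) =
      posMultiplesSeries 1 * compositionSeries (fun L => (dsvL L : R)) +
        posMultiplesSeries 3 * halfEvenSeries * compositionSeries (fun _ => 1) := by
  have tail := compositionSeries_take_mul_drop 1 (fun _ => (1 : R)) (fun L => (dsvL L : R))
  have head := compositionSeries_take_mul_drop 3 (fun P => (headValleyDepth P : R)) (fun _ => 1)
  simp only [one_mul, mul_one] at tail head
  rw [← compositionSeries_length_eq_one, ← compositionSeries_headValleyDepth_length_eq_three,
    ← tail, ← head, ← compositionSeries_add]
  congr 1
  funext L
  rw [Pi.add_apply, dsvL_eq_dsvL_tail_add, headValleyDepth_eq_ite]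
  cases L <;> simp

end CommRing

open PowerSeries in
/-- `(1−2x)²·(1−x³)·(1−x²)²·(Σ_{n≥0} dsv(n)·xⁿ) = x⁵ − 2x⁶ + x⁷` in `ℚ[[x]]`. -/
theorem dsvN_generating_function :
    (1 - 2 * (X : PowerSeries ℚ))^2 * (1 - X^3) * (1 - X^2)^2 *
      PowerSeries.mk (fun n => (dsvN n : ℚ))
    = X^5 - 2 * X^6 + X^7 := by
  have hmk : mk (fun n => (dsvN n : ℚ)) = compositionSeries (fun L => (dsvL L : ℚ)) := by
    ext n
    simp [dsvN, compositionSeries, sum_composition_eq_sum_compositionLists]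
  rw [hmk]
  set D := compositionSeries (fun L => (dsvL L : ℚ))
  set A := compositionSeries (fun _ => (1 : ℚ))
  set T : ℚ⟦X⟧ := posMultiplesSeries 3
  set S : ℚ⟦X⟧ := halfEvenSeries
  have hJ := one_sub_X_pow_mul_posMultiplesSeries (R := ℚ) one_pos
  have hA : (1 - 2 * X) * A = 1 - X := one_sub_two_X_mul_compositionSeries_one
  have hT : (1 - X ^ 3) * T = X ^ 3 := one_sub_X_pow_mul_posMultiplesSeries (by norm_num)
  have hS : (1 - X ^ 2) ^ 2 * S = X ^ 2 := by
    rw [sq, mul_assoc, one_sub_X_sq_mul_halfEvenSeries,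
      one_sub_X_pow_mul_posMultiplesSeries (by norm_num)]
  have h1 : (1 - 2 * X) * D = (1 - X) * (T * S) * A := by
    linear_combination (1 - X) * compositionSeries_dsvL (R := ℚ) + D * hJ
  have h2 : (1 - 2 * X) ^ 2 * D = (1 - X) ^ 2 * (T * S) := by
    linear_combination (1 - 2 * X) * h1 + (1 - X) * (T * S) * hA
  linear_combination (1 - X ^ 3) * (1 - X ^ 2) ^ 2 * h2 + (1 - X) ^ 2 * (1 - X ^ 2) ^ 2 * S * hT
    + (1 - X) ^ 2 * X ^ 3 * hS
end
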